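/- arXiv:0810.2072 — 2 statements merged into one kernel-verified Lean document; each statement's English description precedes it below -/
import Mathlib

section
/- Let $F : \mathbb{R} \to \mathbb{R}$ be a function of bounded variation, and suppose at a point $x_0$ the symmetric derivative $F'_{sym}(x_0) = \lim_{h \to 0^+} \frac{F(x_0+h)-F(x_0-h)}{2h}$ exists. Then the Poisson integral $\mathcal{P}_F(x_0, y) = \frac{y}{\pi}\int_{-\infty}^{\infty} \frac{dF(t)}{(x_0-t)^2 + y^2}$ converges to $F'_{sym}(x_0)$ as $y \to 0^+$. -/
/-!
Writing `((x₀ - t)² + y²)⁻¹ = ∫_{|x₀ - t|}^∞ 2h / (h² + y²)² dh` and applying Fubini turns the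
Poisson integral into `∫₀^∞ (y / π) · 2h / (h² + y²)² · (F (x₀ + h) - F (x₀ - h)) dh`. After the
substitution `h = y u` this is `∫₀^∞ K(u) q(y u) du`, where `q(h) = (F (x₀ + h) - F (x₀ - h)) / 2h`
is the symmetric difference quotient and `K(u) = 4u² / (π (1 + u²)²)` has total mass `1`.
Since `q` converges at `0⁺` and is `O(1/h)` by bounded variation, it is bounded on `(0, ∞)`, and
dominated convergence gives `∫₀^∞ K(u) q(y u) du → F'_sym(x₀)`.
-/

open MeasureTheory Filter Set Topology Real

namespace Fatou

theorem hasDerivAt_neg_inv_sq_add_sq {y : ℝ} (hy : y ≠ 0) (h : ℝ) :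
    HasDerivAt (fun h => -(h ^ 2 + y ^ 2)⁻¹) (2 * h / (h ^ 2 + y ^ 2) ^ 2) h := by
  have hpos : h ^ 2 + y ^ 2 ≠ 0 := by positivity
  refine (((hasDerivAt_pow 2 h).add_const (y ^ 2)).inv hpos).neg.congr_deriv ?_
  simp [neg_div]

theorem tendsto_neg_inv_sq_add_sq_atTop (y : ℝ) :
    Tendsto (fun h : ℝ => -(h ^ 2 + y ^ 2)⁻¹) atTop (𝓝 0) := by
  simpa using (tendsto_atTop_add_const_right _ (y ^ 2)
    (tendsto_pow_atTop two_ne_zero)).inv_tendsto_atTop.neg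

theorem integrableOn_Ioi_two_mul_div_sq_add_sq_sq {y s : ℝ} (hy : y ≠ 0) (hs : 0 ≤ s) :
    IntegrableOn (fun h => 2 * h / (h ^ 2 + y ^ 2) ^ 2) (Ioi s) :=
  integrableOn_Ioi_deriv_of_nonneg' (fun h _ => hasDerivAt_neg_inv_sq_add_sq hy h)
    (fun h hh => by have : 0 ≤ h := hs.trans hh.le; positivity)
    (tendsto_neg_inv_sq_add_sq_atTop y)

theorem setIntegral_Ioi_two_mul_div_sq_add_sq_sq {y s : ℝ} (hy : y ≠ 0) (hs : 0 ≤ s) :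
    ∫ h in Ioi s, 2 * h / (h ^ 2 + y ^ 2) ^ 2 = (s ^ 2 + y ^ 2)⁻¹ := by
  rw [integral_Ioi_of_hasDerivAt_of_nonneg' (fun h _ => hasDerivAt_neg_inv_sq_add_sq hy h)
    (fun h hh => by have : 0 ≤ h := hs.trans hh.le; positivity)
    (tendsto_neg_inv_sq_add_sq_atTop y)]
  ring

theorem Ioi_inter_setOf_ae_eq_Ioi_abs_sub (x₀ t : ℝ) :
    (Ioi 0 ∩ {h : ℝ | x₀ - h < t ∧ t ≤ x₀ + h} : Set ℝ) =ᵐ[volume] Ioi |x₀ - t| := by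
  refine eventuallyEq_set.2 ?_
  filter_upwards [compl_mem_ae_iff.2 (measure_singleton |x₀ - t|)] with h hh
  simp only [mem_compl_iff, mem_singleton_iff] at hh
  simp only [mem_inter_iff, mem_Ioi, mem_ofPred_eq]
  constructor
  · rintro ⟨-, h₁, h₂⟩
    exact lt_of_le_of_ne (abs_le.2 ⟨by linarith, by linarith⟩) (Ne.symm hh)
  · intro h'
    obtain ⟨h₁, h₂⟩ := abs_lt.1 h'
    exact ⟨(abs_nonneg _).trans_lt h', by linarith, by linarith⟩

/-- Slicing along the half-open windows `(x₀ - h, x₀ + h]` instead of `|x₀ - t| < h` changes each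
`t`-slice only at the point `h = |x₀ - t|`, so the atoms of `μ` play no role. -/
theorem integral_setIntegral_Ioi_abs_sub (μ : Measure ℝ) [IsFiniteMeasure μ] {k : ℝ → ℝ}
    (hk : IntegrableOn k (Ioi 0)) (x₀ : ℝ) :
    ∫ t, (∫ h in Ioi |x₀ - t|, k h) ∂μ = ∫ h in Ioi 0, k h * μ.real (Ioc (x₀ - h) (x₀ + h)) := by
  set S : Set (ℝ × ℝ) := {p | x₀ - p.2 < p.1 ∧ p.1 ≤ x₀ + p.2}
  have hS : MeasurableSet S := by
    simp only [S, ofPred_and]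
    exact (measurableSet_lt (by fun_prop) (by fun_prop)).inter
      (measurableSet_le (by fun_prop) (by fun_prop))
  have hint : Integrable (S.indicator fun p => k p.2) (μ.prod (volume.restrict (Ioi 0))) :=
    (hk.comp_snd μ).indicator hS
  have hslice (t : ℝ) :
      ∫ h in Ioi 0, S.indicator (fun p => k p.2) (t, h) = ∫ h in Ioi |x₀ - t|, k h := by
    change ∫ h in Ioi 0, (Prod.mk t ⁻¹' S).indicator k h = _
    rw [setIntegral_indicator (hS.preimage measurable_prodMk_left)]
    exact setIntegral_congr_set (Ioi_inter_setOf_ae_eq_Ioi_abs_sub x₀ t)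
  have hfiber (h : ℝ) :
      ∫ t, S.indicator (fun p => k p.2) (t, h) ∂μ = k h * μ.real (Ioc (x₀ - h) (x₀ + h)) := by
    change ∫ t, (Ioc (x₀ - h) (x₀ + h)).indicator (fun _ => k h) t ∂μ = _
    rw [integral_indicator_const _ measurableSet_Ioc, smul_eq_mul, mul_comm]
  calc ∫ t, (∫ h in Ioi |x₀ - t|, k h) ∂μ
      = ∫ t, (∫ h in Ioi 0, S.indicator (fun p => k p.2) (t, h)) ∂μ := by simp only [hslice]
    _ = ∫ h in Ioi 0, ∫ t, S.indicator (fun p => k p.2) (t, h) ∂μ := integral_integral_swap hint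
    _ = _ := by simp only [hfiber]

theorem integral_inv_sub_sq_add_sq (μ : Measure ℝ) [IsFiniteMeasure μ] (x₀ : ℝ) {y : ℝ}
    (hy : y ≠ 0) :
    ∫ t, ((x₀ - t) ^ 2 + y ^ 2)⁻¹ ∂μ =
      ∫ h in Ioi 0, 2 * h / (h ^ 2 + y ^ 2) ^ 2 * μ.real (Ioc (x₀ - h) (x₀ + h)) := by
  rw [← integral_setIntegral_Ioi_abs_sub μ
    (integrableOn_Ioi_two_mul_div_sq_add_sq_sq hy le_rfl) x₀]
  congr 1 with t
  rw [setIntegral_Ioi_two_mul_div_sq_add_sq_sq hy (abs_nonneg _), sq_abs]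

theorem monotone_measureReal_Ioc_sub_add (μ : Measure ℝ) [IsFiniteMeasure μ] (x₀ : ℝ) :
    Monotone fun h => μ.real (Ioc (x₀ - h) (x₀ + h)) :=
  fun _ _ hab => measureReal_mono (Ioc_subset_Ioc (by linarith) (by linarith))

theorem integrableOn_mul_measureReal_Ioc (μ : Measure ℝ) [IsFiniteMeasure μ] {k : ℝ → ℝ}
    (hk : IntegrableOn k (Ioi 0)) (x₀ : ℝ) :
    IntegrableOn (fun h => k h * μ.real (Ioc (x₀ - h) (x₀ + h))) (Ioi 0) :=
  hk.mul_bdd (monotone_measureReal_Ioc_sub_add μ x₀).measurable.aestronglyMeasurable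
    (ae_of_all _ fun _ => by
      rw [Real.norm_of_nonneg measureReal_nonneg]
      exact measureReal_mono (subset_univ _))

/-- `F (x₀ + h) - F (x₀ - h)` for a distribution function `F` of `μ₁ - μ₂`. -/
def symmetricMass (μ₁ μ₂ : Measure ℝ) (x₀ h : ℝ) : ℝ :=
  μ₁.real (Ioc (x₀ - h) (x₀ + h)) - μ₂.real (Ioc (x₀ - h) (x₀ + h))

theorem measurable_symmetricMass (μ₁ μ₂ : Measure ℝ) [IsFiniteMeasure μ₁] [IsFiniteMeasure μ₂]
    (x₀ : ℝ) : Measurable (symmetricMass μ₁ μ₂ x₀) :=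
  (monotone_measureReal_Ioc_sub_add μ₁ x₀).measurable.sub
    (monotone_measureReal_Ioc_sub_add μ₂ x₀).measurable

theorem abs_symmetricMass_le (μ₁ μ₂ : Measure ℝ) [IsFiniteMeasure μ₁] [IsFiniteMeasure μ₂]
    (x₀ h : ℝ) : |symmetricMass μ₁ μ₂ x₀ h| ≤ μ₁.real univ + μ₂.real univ := by
  have h₁ : μ₁.real (Ioc (x₀ - h) (x₀ + h)) ≤ μ₁.real univ := measureReal_mono (subset_univ _)
  have h₂ : μ₂.real (Ioc (x₀ - h) (x₀ + h)) ≤ μ₂.real univ := measureReal_mono (subset_univ _)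
  rw [symmetricMass, abs_le]
  constructor <;> linarith [measureReal_nonneg (μ := μ₁) (s := Ioc (x₀ - h) (x₀ + h)),
    measureReal_nonneg (μ := μ₂) (s := Ioc (x₀ - h) (x₀ + h))]

/-- The substitution `h = y u` turns `(y / π) · 2h / (h² + y²)² · 2h dh` into
`fatouKernel u du`. -/
noncomputable def fatouKernel (u : ℝ) : ℝ := 4 * u ^ 2 / (π * (1 + u ^ 2) ^ 2)

theorem fatouKernel_nonneg (u : ℝ) : 0 ≤ fatouKernel u := by
  unfold fatouKernel; positivity

theorem hasDerivAt_arctan_sub_div (u : ℝ) :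
    HasDerivAt (fun u => 2 / π * (arctan u - u / (1 + u ^ 2))) (fatouKernel u) u := by
  have hpos : 1 + u ^ 2 ≠ 0 := by positivity
  have hquot : HasDerivAt (fun u : ℝ => u / (1 + u ^ 2))
      ((1 * (1 + u ^ 2) - u * (2 * u)) / (1 + u ^ 2) ^ 2) u := by
    simpa using (hasDerivAt_id' u).fun_div ((hasDerivAt_pow 2 u).const_add 1) hpos
  refine ((hasDerivAt_arctan u).sub hquot).const_mul (2 / π) |>.congr_deriv ?_
  unfold fatouKernel
  field_simp
  ring

theorem tendsto_arctan_sub_div_atTop :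
    Tendsto (fun u => 2 / π * (arctan u - u / (1 + u ^ 2))) atTop (𝓝 1) := by
  have hquot : Tendsto (fun u : ℝ => u / (1 + u ^ 2)) atTop (𝓝 0) := by
    refine squeeze_zero' ?_ ?_ tendsto_inv_atTop_zero <;>
      filter_upwards [eventually_gt_atTop 0] with u hu
    · positivity
    · rw [div_le_iff₀ (by positivity), inv_mul_eq_div, le_div_iff₀ hu]
      nlinarith
  have := ((tendsto_arctan_atTop.mono_right nhdsWithin_le_nhds).sub hquot).const_mul (2 / π)
  convert this using 2
  field_simp
  ring

theorem integrableOn_fatouKernel : IntegrableOn fatouKernel (Ioi 0) :=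
  integrableOn_Ioi_deriv_of_nonneg' (fun u _ => hasDerivAt_arctan_sub_div u)
    (fun u _ => fatouKernel_nonneg u) tendsto_arctan_sub_div_atTop

theorem setIntegral_fatouKernel : ∫ u in Ioi 0, fatouKernel u = 1 := by
  rw [integral_Ioi_of_hasDerivAt_of_nonneg' (fun u _ => hasDerivAt_arctan_sub_div u)
    (fun u _ => fatouKernel_nonneg u) tendsto_arctan_sub_div_atTop]
  simp

theorem mul_setIntegral_Ioi_eq_setIntegral_fatouKernel (D : ℝ → ℝ) {y : ℝ} (hy : 0 < y) :
    y / π * ∫ h in Ioi 0, 2 * h / (h ^ 2 + y ^ 2) ^ 2 * D h =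
      ∫ u in Ioi 0, fatouKernel u * (D (y * u) / (2 * (y * u))) := by
  have hsubst := integral_comp_mul_left_Ioi (fun h => 2 * h / (h ^ 2 + y ^ 2) ^ 2 * D h) 0 hy
  rw [mul_zero, smul_eq_mul] at hsubst
  calc y / π * ∫ h in Ioi 0, 2 * h / (h ^ 2 + y ^ 2) ^ 2 * D h
      = y ^ 2 / π * ∫ u in Ioi 0, 2 * (y * u) / ((y * u) ^ 2 + y ^ 2) ^ 2 * D (y * u) := by
        rw [hsubst]; field_simp
    _ = ∫ u in Ioi 0, fatouKernel u * (D (y * u) / (2 * (y * u))) := by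
        rw [← integral_const_mul]
        refine setIntegral_congr_fun measurableSet_Ioi fun u (hu : 0 < u) => ?_
        unfold fatouKernel
        field_simp
        ring

theorem exists_abs_le_of_tendsto_nhdsGT {q : ℝ → ℝ} {L M : ℝ}
    (hq : Tendsto q (𝓝[>] 0) (𝓝 L)) (hM : ∀ h > 0, |q h| ≤ M / h) :
    ∃ B, ∀ h > 0, |q h| ≤ B := by
  obtain ⟨δ, hδ, hnear⟩ := mem_nhdsGT_iff_exists_Ioo_subset.1
    (hq.eventually (eventually_abs_sub_lt L one_pos))
  refine ⟨max (|L| + 1) (M / δ), fun h hh => ?_⟩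
  rcases lt_or_ge h δ with hhδ | hδh
  · have hL : |q h - L| < 1 := hnear ⟨hh, hhδ⟩
    have := abs_sub_abs_le_abs_sub (q h) L
    exact le_max_of_le_left (by linarith)
  · have hM0 : 0 ≤ M := by
      simpa using (le_div_iff₀ hδ).1 ((abs_nonneg _).trans (hM δ hδ))
    exact le_max_of_le_right ((hM h hh).trans (div_le_div_of_nonneg_left hM0 hδ hδh))

theorem tendsto_setIntegral_Ioi_mul_comp_mul {K q : ℝ → ℝ} {B L : ℝ}
    (hK : IntegrableOn K (Ioi 0)) (hq_meas : Measurable q) (hq_bdd : ∀ h > 0, |q h| ≤ B)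
    (hq : Tendsto q (𝓝[>] 0) (𝓝 L)) :
    Tendsto (fun y => ∫ u in Ioi 0, K u * q (y * u)) (𝓝[>] 0)
      (𝓝 ((∫ u in Ioi 0, K u) * L)) := by
  rw [← integral_mul_const]
  refine tendsto_integral_filter_of_dominated_convergence (fun u => ‖K u‖ * B)
    (Eventually.of_forall fun y => hK.aestronglyMeasurable.mul
      (hq_meas.comp (measurable_const_mul y)).aestronglyMeasurable) ?_ (hK.norm.mul_const B) ?_
  · filter_upwards [self_mem_nhdsWithin] with y (hy : 0 < y)
    filter_upwards [self_mem_ae_restrict measurableSet_Ioi] with u (hu : 0 < u)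
    rw [norm_mul, Real.norm_eq_abs (q _)]
    exact mul_le_mul_of_nonneg_left (hq_bdd _ (mul_pos hy hu)) (norm_nonneg _)
  · filter_upwards [self_mem_ae_restrict measurableSet_Ioi] with u (hu : 0 < u)
    refine tendsto_const_nhds.mul (hq.comp (tendsto_nhdsWithin_iff.2 ⟨?_, ?_⟩))
    · exact ((continuous_mul_const u).tendsto' 0 0 (zero_mul u)).mono_left nhdsWithin_le_nhds
    · filter_upwards [self_mem_nhdsWithin] with y (hy : 0 < y) using mul_pos hy hu

theorem poisson_eq_setIntegral_fatouKernel (μ₁ μ₂ : Measure ℝ) [IsFiniteMeasure μ₁]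
    [IsFiniteMeasure μ₂] (x₀ : ℝ) {y : ℝ} (hy : 0 < y) :
    y / π * ((∫ t, 1 / ((x₀ - t) ^ 2 + y ^ 2) ∂μ₁) - ∫ t, 1 / ((x₀ - t) ^ 2 + y ^ 2) ∂μ₂) =
      ∫ u in Ioi 0, fatouKernel u * (symmetricMass μ₁ μ₂ x₀ (y * u) / (2 * (y * u))) := by
  have hint (μ : Measure ℝ) [IsFiniteMeasure μ] := integrableOn_mul_measureReal_Ioc μ
    (integrableOn_Ioi_two_mul_div_sq_add_sq_sq hy.ne' le_rfl) x₀
  simp only [one_div]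
  rw [integral_inv_sub_sq_add_sq μ₁ x₀ hy.ne', integral_inv_sub_sq_add_sq μ₂ x₀ hy.ne',
    ← integral_sub (hint μ₁) (hint μ₂), ← mul_setIntegral_Ioi_eq_setIntegral_fatouKernel _ hy]
  simp only [symmetricMass, mul_sub]

end Fatou

open Fatou

/-- Fatou's theorem: Let `F` be a function of bounded variation on `ℝ`,
realized as a distribution function of the signed measure `μ₁ - μ₂` (with `μ₁, μ₂` finite
Borel measures).  If the symmetric derivative of `F` at `x₀` exists and equals `L`, then the
Poisson integral `𝒫_F(x₀, y) = (y/π) ∫ dF(t) / ((x₀ - t)² + y²)` tends to `L` as `y → 0⁺`. -/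
theorem fatou_symmetric_derivative
    (μ₁ μ₂ : Measure ℝ) [IsFiniteMeasure μ₁] [IsFiniteMeasure μ₂]
    (F : ℝ → ℝ)
    (hF : ∀ a b : ℝ, a ≤ b →
      F b - F a = (μ₁ (Set.Ioc a b)).toReal - (μ₂ (Set.Ioc a b)).toReal)
    (x₀ L : ℝ)
    (hsym : Tendsto (fun h : ℝ => (F (x₀ + h) - F (x₀ - h)) / (2 * h))
      (𝓝[>] 0) (𝓝 L)) :
    Tendsto (fun y : ℝ =>
        y / Real.pi *
          ((∫ t, 1 / ((x₀ - t) ^ 2 + y ^ 2) ∂μ₁) - ∫ t, 1 / ((x₀ - t) ^ 2 + y ^ 2) ∂μ₂))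
      (𝓝[>] 0) (𝓝 L) := by
  have hmass : Tendsto (fun h => symmetricMass μ₁ μ₂ x₀ h / (2 * h)) (𝓝[>] 0) (𝓝 L) := by
    refine hsym.congr' ?_
    filter_upwards [self_mem_nhdsWithin] with h (hh : 0 < h)
    rw [hF _ _ (by linarith), symmetricMass, measureReal_def, measureReal_def]
  obtain ⟨B, hB⟩ := exists_abs_le_of_tendsto_nhdsGT hmass
    (M := (μ₁.real univ + μ₂.real univ) / 2) fun h hh => by
      rw [abs_div, abs_of_pos (show (0 : ℝ) < 2 * h by linarith), div_div]
      gcongr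
      exact abs_symmetricMass_le μ₁ μ₂ x₀ h
  have hlim := tendsto_setIntegral_Ioi_mul_comp_mul integrableOn_fatouKernel
    ((measurable_symmetricMass μ₁ μ₂ x₀).div (measurable_const.mul measurable_id)) hB hmass
  rw [setIntegral_fatouKernel, one_mul] at hlim
  refine hlim.congr' ?_
  filter_upwards [self_mem_nhdsWithin] with y (hy : 0 < y)
  exact (poisson_eq_setIntegral_fatouKernel μ₁ μ₂ x₀ hy).symm
end

section
/- With notation as in the Aronszajn equation setting ($V = F^*JF$, $H_r = H_0 + rV$, $T_r(z) = F(H_r-z)^{-1}F^*$), for all non-real $z$ the identity $\mathrm{Im}\,T_r(z) = (1 + rT_0(\bar z)J)^{-1}\, \mathrm{Im}\,T_0(z)\, (1 + rJ\,T_0(z))^{-1}$ holds, where $\mathrm{Im}\,T = \frac{1}{2i}(T - T^*)$. -/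
/-! Write `s = T₀(z)`, `t = T_r(z)` and `j = rJ`. The second resolvent identity
`R_r - R_0 = -R_r (rV) R_0` for `R_r = (H_r - z)⁻¹`, sandwiched between `F` and `F*`, gives
`t j s = s - t`; its adjoint at `z̄` gives `s j t = s - t`. These relations (and their adjoints)
say that `1 - j t` inverts `1 + j s`, that `1 - t* j` inverts `1 + s* j`, and that
`s (1 - j t) = t` and `(1 - t* j) s* = t*`; sandwiching `s - s*` between the two inverses
therefore yields `t - t*`. -/

open ContinuousLinearMap

noncomputable section

/-- The imaginary part `Im T = (T - T*)/(2i)` of a bounded operator. -/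
def imOp {K : Type*} [NormedAddCommGroup K] [InnerProductSpace ℂ K] [CompleteSpace K]
    (T : K →L[ℂ] K) : K →L[ℂ] K :=
  (2 * Complex.I)⁻¹ • (T - adjoint T)

section Ring

variable {A : Type*} [Ring A] {s t j : A}

theorem one_add_mul_mul_one_sub_mul (h : s * j * t = s - t) : (1 + j * s) * (1 - j * t) = 1 := by
  calc (1 + j * s) * (1 - j * t) = 1 + j * (s - t - s * j * t) := by noncomm_ring
    _ = 1 := by rw [h, sub_self, mul_zero, add_zero]

theorem one_sub_mul_mul_one_add_mul (h : t * j * s = s - t) : (1 - j * t) * (1 + j * s) = 1 := by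
  calc (1 - j * t) * (1 + j * s) = 1 + j * (s - t - t * j * s) := by noncomm_ring
    _ = 1 := by rw [h, sub_self, mul_zero, add_zero]

theorem one_add_mul_mul_one_sub_mul' (h : s * j * t = s - t) : (1 + s * j) * (1 - t * j) = 1 := by
  calc (1 + s * j) * (1 - t * j) = 1 + (s - t - s * j * t) * j := by noncomm_ring
    _ = 1 := by rw [h, sub_self, zero_mul, add_zero]

theorem one_sub_mul_mul_one_add_mul' (h : t * j * s = s - t) : (1 - t * j) * (1 + s * j) = 1 := by
  calc (1 - t * j) * (1 + s * j) = 1 + (s - t - t * j * s) * j := by noncomm_ring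
    _ = 1 := by rw [h, sub_self, zero_mul, add_zero]

theorem Ring.inverse_one_add_mul (hl : s * j * t = s - t) (hr : t * j * s = s - t) :
    Ring.inverse (1 + j * s) = 1 - j * t :=
  Ring.inverse_unit ⟨_, _, one_add_mul_mul_one_sub_mul hl, one_sub_mul_mul_one_add_mul hr⟩

theorem Ring.inverse_one_add_mul' (hl : s * j * t = s - t) (hr : t * j * s = s - t) :
    Ring.inverse (1 + s * j) = 1 - t * j :=
  Ring.inverse_unit ⟨_, _, one_add_mul_mul_one_sub_mul' hl, one_sub_mul_mul_one_add_mul' hr⟩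

theorem one_sub_mul_mul_sub_mul_one_sub_mul {s' t' : A} (h : s * j * t = s - t)
    (h' : t' * j * s' = s' - t') : (1 - t' * j) * (s - s') * (1 - j * t) = t - t' := by
  have hst : s * (1 - j * t) = t := by
    rw [mul_sub, mul_one, ← mul_assoc, h, sub_sub_cancel]
  have hst' : (1 - t' * j) * s' = t' := by
    rw [sub_mul, one_mul, h', sub_sub_cancel]
  calc (1 - t' * j) * (s - s') * (1 - j * t)
      = (1 - t' * j) * (s * (1 - j * t)) - (1 - t' * j) * s' * (1 - j * t) := by noncomm_ring
    _ = t - t' := by rw [hst, hst']; noncomm_ring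

end Ring

theorem Ring.inverse_mul_sub_star_mul_inverse {A : Type*} [Ring A] [StarRing A] {s t j : A}
    (hj : IsSelfAdjoint j) (h : t * j * s = s - t)
    (h' : star t * j * star s = star s - star t) :
    Ring.inverse (1 + star s * j) * (s - star s) * Ring.inverse (1 + j * s) = t - star t := by
  have hl : s * j * t = s - t := by
    simpa [mul_assoc, hj.star_eq] using congrArg star h'
  have hl' : star s * j * star t = star s - star t := by
    simpa [mul_assoc, hj.star_eq] using congrArg star h
  rw [Ring.inverse_one_add_mul hl h, Ring.inverse_one_add_mul' hl' h']
  exact one_sub_mul_mul_sub_mul_one_sub_mul hl h'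

theorem comp_mul_comp_eq_sub_of_sub_eq {𝕜 M N : Type*} [NormedField 𝕜]
    [NormedAddCommGroup M] [NormedSpace 𝕜 M] [NormedAddCommGroup N] [NormedSpace 𝕜 N]
    {F : M →L[𝕜] N} {G : N →L[𝕜] M} {P Q : M →L[𝕜] M} {j : N →L[𝕜] N}
    (h : P - Q = -(P ∘L (G ∘L j ∘L F) ∘L Q)) :
    (F ∘L P ∘L G) * j * (F ∘L Q ∘L G) = F ∘L Q ∘L G - F ∘L P ∘L G := by
  have hPQ : P ∘L (G ∘L j ∘L F) ∘L Q = Q - P := by rw [← neg_sub P Q, h, neg_neg]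
  calc (F ∘L P ∘L G) * j * (F ∘L Q ∘L G) = F ∘L (P ∘L (G ∘L j ∘L F) ∘L Q) ∘L G := by
        simp only [mul_def, comp_assoc]
    _ = F ∘L Q ∘L G - F ∘L P ∘L G := by rw [hPQ, sub_comp, comp_sub]

theorem adjoint_comp_comp_adjoint {𝕜 E K : Type*} [RCLike 𝕜]
    [NormedAddCommGroup E] [InnerProductSpace 𝕜 E] [CompleteSpace E]
    [NormedAddCommGroup K] [InnerProductSpace 𝕜 K] [CompleteSpace K]
    (F : E →L[𝕜] K) (P : E →L[𝕜] E) :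
    adjoint (F ∘L P ∘L adjoint F) = F ∘L adjoint P ∘L adjoint F := by
  rw [adjoint_comp, adjoint_comp, adjoint_adjoint, comp_assoc]

/-- In the Aronszajn equation setting (`V = F*JF`, `H_r = H₀ + rV`, with the
self-adjoint operators `H_r` encoded by their resolvent families `R r z = (H_r - z)⁻¹`, and
`T_r(z) = F (R r z) F*`), for all non-real `z` the identity
`Im T_r(z) = (1 + r T₀(z̄) J)⁻¹ (Im T₀(z)) (1 + r J T₀(z))⁻¹` holds. -/
theorem im_Tr_eq_inv_mul_im_T0_mul_inv
    {H K : Type*} [NormedAddCommGroup H] [InnerProductSpace ℂ H] [CompleteSpace H]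
    [NormedAddCommGroup K] [InnerProductSpace ℂ K] [CompleteSpace K]
    (F : H →L[ℂ] K) (J : K →L[ℂ] K) (hJ : IsSelfAdjoint J)
    (R : ℝ → ℂ → (H →L[ℂ] H))
    (hadj : ∀ (r : ℝ) (z : ℂ), z.im ≠ 0 →
      adjoint (R r z) = R r ((starRingEnd ℂ) z))
    (hsri : ∀ (r : ℝ) (z : ℂ), z.im ≠ 0 →
      R r z - R 0 z
        = - (R r z).comp ((r • ((adjoint F).comp (J.comp F))).comp (R 0 z)))
    (T : ℝ → ℂ → (K →L[ℂ] K))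
    (hT : ∀ (r : ℝ) (z : ℂ), T r z = F.comp ((R r z).comp (adjoint F))) :
    ∀ (r : ℝ) (z : ℂ), z.im ≠ 0 →
      imOp (T r z)
        = Ring.inverse ((1 : K →L[ℂ] K) + r • (T 0 ((starRingEnd ℂ) z) * J))
            * imOp (T 0 z)
            * Ring.inverse ((1 : K →L[ℂ] K) + r • (J * T 0 z)) := by
  intro r z hz
  have hstar : ∀ r' w, w.im ≠ 0 → star (T r' w) = T r' (starRingEnd ℂ w) := fun r' w hw => by
    rw [star_eq_adjoint, hT, hT, adjoint_comp_comp_adjoint, hadj r' w hw]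
  have hres : ∀ w : ℂ, w.im ≠ 0 → T r w * (r • J) * T 0 w = T 0 w - T r w := fun w hw => by
    rw [hT, hT]
    refine comp_mul_comp_eq_sub_of_sub_eq ?_
    simp only [hsri r w hw, smul_comp, comp_smul]
  have key := Ring.inverse_mul_sub_star_mul_inverse ((IsSelfAdjoint.all r).smul hJ) (hres z hz)
    (by rw [hstar r z hz, hstar 0 z hz]; exact hres _ (by simpa using hz))
  rw [imOp, imOp, ← star_eq_adjoint, ← star_eq_adjoint, ← hstar 0 z hz, ← mul_smul_comm,
    ← smul_mul_assoc, mul_smul_comm, smul_mul_assoc, key]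

end
end
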